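/- arXiv:2202.08686 — 2 statements merged into one kernel-verified Lean document; each statement's English description precedes it below -/
import Mathlib

section
/- (Topological core of Lemma 3: two intersection points can merge at a tangent point only if they are adjacent in the cyclic ordering.) Let a, c, b, d : [0,1] → ℝ be continuous functions such that a(t) < c(t) < b(t) < d(t) < a(t) + 2π for every t ∈ [0,1), so that for t < 1 the four points e^{i a(t)}, e^{i c(t)}, e^{i b(t)}, e^{i d(t)} are distinct points of the unit circle in this cyclic order, with the points of parameters c and d separating those of parameters a and b. If (cos a(1), sin a(1)) = (cos b(1), sin b(1)), i.e. the two non-adjacent points merge at t = 1, then (cos c(1), sin c(1)) = (cos a(1), sin a(1)) or (cos d(1), sin d(1)) = (cos a(1), sin a(1)); that is, one of the two separating points must merge with them as well. -/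
/-! Passing to the limit `t → 1⁻` turns the strict cyclic order `a < c < b < d < a + 2π`
into the closed one. Then `a 1 ≤ b 1 ≤ a 1 + 2π`, so the merging of the points of parameters
`a 1` and `b 1` forces `b 1 = a 1`, which squeezes `c 1` onto `a 1`, or `b 1 = a 1 + 2π`,
which squeezes `d 1` onto `a 1 + 2π`. -/

open Real Set

theorem ContinuousOn.le_right_of_forall_Ico {α β : Type*} [TopologicalSpace α] [LinearOrder α]
    [OrderTopology α] [DenselyOrdered α] [TopologicalSpace β] [Preorder β]
    [OrderClosedTopology β] {f g : α → β} {x y : α} (hxy : x < y)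
    (hf : ContinuousOn f (Icc x y)) (hg : ContinuousOn g (Icc x y))
    (h : ∀ t ∈ Ico x y, f t ≤ g t) : f y ≤ g y := by
  rw [← closure_Ico hxy.ne] at hf hg
  exact le_on_closure h hf hg (by rw [closure_Ico hxy.ne]; exact right_mem_Icc.2 hxy.le)

theorem Real.eq_or_eq_add_two_pi_of_cos_sin_eq {x y : ℝ} (hxy : x ≤ y) (hyx : y ≤ x + 2 * π)
    (hcos : cos x = cos y) (hsin : sin x = sin y) : y = x ∨ y = x + 2 * π := by
  obtain ⟨k, hk⟩ := Real.Angle.angle_eq_iff_two_pi_dvd_sub.1 (Real.Angle.cos_sin_inj hcos hsin)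
  have hk_nonpos : (k : ℝ) ≤ 0 := by nlinarith [pi_pos]
  have hk_ge : (-1 : ℝ) ≤ k := by nlinarith [pi_pos]
  obtain rfl | rfl : k = 0 ∨ k = -1 := by
    have : k ≤ 0 := by exact_mod_cast hk_nonpos
    have : -1 ≤ k := by exact_mod_cast hk_ge
    omega
  · left; push_cast at hk; linarith
  · right; push_cast at hk; linarith

theorem Real.cos_sin_eq_of_cyclic_le {x z y w : ℝ} (hxz : x ≤ z) (hzy : z ≤ y) (hyw : y ≤ w)
    (hwx : w ≤ x + 2 * π) (hmerge : (cos x, sin x) = (cos y, sin y)) :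
    (cos z, sin z) = (cos x, sin x) ∨ (cos w, sin w) = (cos x, sin x) := by
  obtain ⟨hcos, hsin⟩ := Prod.mk.inj hmerge
  rcases Real.eq_or_eq_add_two_pi_of_cos_sin_eq (by linarith) (by linarith) hcos hsin with
    hy | hy
  · left
    rw [le_antisymm (hy ▸ hzy) hxz]
  · right
    rw [le_antisymm hwx (hy ▸ hyw), cos_add_two_pi, sin_add_two_pi]

/-- Two intersection points on the circle can merge only if they are adjacent in the cyclic
ordering: if four continuously moving points stay in cyclic order `a, c, b, d` for `t < 1`
and the two non-adjacent points `a`, `b` merge at `t = 1`, then one of the separating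
points `c`, `d` merges with them as well. -/
theorem stmt_2 (a c b d : ℝ → ℝ)
    (ha : ContinuousOn a (Set.Icc 0 1)) (hc : ContinuousOn c (Set.Icc 0 1))
    (hb : ContinuousOn b (Set.Icc 0 1)) (hd : ContinuousOn d (Set.Icc 0 1))
    (horder : ∀ t ∈ Set.Ico (0 : ℝ) 1,
      a t < c t ∧ c t < b t ∧ b t < d t ∧ d t < a t + 2 * Real.pi)
    (hmerge : (Real.cos (a 1), Real.sin (a 1)) = (Real.cos (b 1), Real.sin (b 1))) :
    (Real.cos (c 1), Real.sin (c 1)) = (Real.cos (a 1), Real.sin (a 1)) ∨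
      (Real.cos (d 1), Real.sin (d 1)) = (Real.cos (a 1), Real.sin (a 1)) := by
  have h01 : (0 : ℝ) < 1 := one_pos
  refine Real.cos_sin_eq_of_cyclic_le ?_ ?_ ?_ ?_ hmerge
  · exact ha.le_right_of_forall_Ico h01 hc fun t ht => (horder t ht).1.le
  · exact hc.le_right_of_forall_Ico h01 hb fun t ht => (horder t ht).2.1.le
  · exact hb.le_right_of_forall_Ico h01 hd fun t ht => (horder t ht).2.2.1.le
  · exact hd.le_right_of_forall_Ico h01 (ha.add continuousOn_const)
      fun t ht => (horder t ht).2.2.2.le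
end

section
/- (Topological core of Theorem 2: inverse kinematic solutions cannot exchange places without a tangency, so they lie in distinct reduced aspects.) Let a, b, c : [0,1] → ℝ² be continuous maps whose values lie on the unit circle and which are pairwise distinct at every t ∈ [0,1] (a(t) ≠ b(t), b(t) ≠ c(t), a(t) ≠ c(t)). Then it is impossible that a(1) = b(0), b(1) = a(0) and c(1) = c(0); that is, two of the points cannot exchange positions along a continuous motion during which all three points remain pairwise distinct. -/
open Real Set

set_option maxHeartbeats 1600000 in
private lemma circle_det_sq (a1 a2 b1 b2 c1 c2 : ℝ)
    (hA : a1 ^ 2 + a2 ^ 2 = 1) (hB : b1 ^ 2 + b2 ^ 2 = 1) (hC : c1 ^ 2 + c2 ^ 2 = 1) :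
    4 * ((b1 - a1) * (c2 - a2) - (b2 - a2) * (c1 - a1)) ^ 2 =
      ((b1 - a1) ^ 2 + (b2 - a2) ^ 2) * ((b1 - c1) ^ 2 + (b2 - c2) ^ 2) *
        ((c1 - a1) ^ 2 + (c2 - a2) ^ 2) := by
  linear_combination (-a1^2*b1^2 + 2*a1^2*b1*c1 - a1^2*b2^2 + 2*a1^2*b2*c2 - a1^2*c1^2 - a1^2*c2^2 + 2*a1*b1^3 - 2*a1*b1^2*c1 + 2*a1*b1*b2^2 - 4*a1*b1*b2*c2 - 2*a1*b1*c1^2 + 2*a1*b1*c2^2 + 2*a1*b2^2*c1 - 4*a1*b2*c1*c2 + 2*a1*c1^3 + 2*a1*c1*c2^2 - a2^2*b1^2 + 2*a2^2*b1*c1 - a2^2*b2^2 + 2*a2^2*b2*c2 - a2^2*c1^2 - a2^2*c2^2 + 2*a2*b1^2*b2 + 2*a2*b1^2*c2 - 4*a2*b1*b2*c1 - 4*a2*b1*c1*c2 + 2*a2*b2^3 - 2*a2*b2^2*c2 + 2*a2*b2*c1^2 - 2*a2*b2*c2^2 + 2*a2*c1^2*c2 + 2*a2*c2^3 - b1^4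 - 2*b1^3*c1 - 2*b1^2*b2^2 + 2*b1^2*b2*c2 + 6*b1^2*c1^2 - 2*b1^2*c2^2 - b1^2 - 2*b1*b2^2*c1 + 8*b1*b2*c1*c2 - 2*b1*c1^3 - 2*b1*c1*c2^2 + 2*b1*c1 - b2^4 + 2*b2^3*c2 - 2*b2^2*c1^2 - 2*b2^2*c2^2 + 3*b2^2 + 2*b2*c1^2*c2 + 2*b2*c2^3 - 6*b2*c2 - c1^4 - 2*c1^2*c2^2 - c1^2 - c2^4 + 3*c2^2) * hA + (-4*a1*a2*b1*c2 - 4*a1*a2*b2*c1 + 8*a1*a2*c1*c2 + 2*a1*b1^2*c1 - 2*a1*b1*c1^2 + 2*a1*b1*c2^2 + 2*a1*b1 + 2*a1*b2^2*c1 - 4*a1*b2*c1*c2 - 2*a1*c1^3 - 2*a1*c1*c2^2 + 4*a2^2*b1*c1 - 4*a2^2*b2*c2 - 8*a2^2*c1^2 + 4*a2^2 + 2*a2*b1^2*c2 - 4*a2*b1*c1*c2 + 2*a2*b2^2*c2 + 2*a2*b2*c1^2 - 2*a2*b2*c2^2 + 2*a2*b2 + 2*a2*c1^2*c2 + 2*a2*c2^3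 - 4*a2*c2 - b1^2*c1^2 - b1^2*c2^2 - b1^2 + 2*b1*c1^3 + 2*b1*c1*c2^2 - 2*b1*c1 - b2^2*c1^2 - b2^2*c2^2 - b2^2 + 2*b2*c1^2*c2 + 2*b2*c2^3 + 2*b2*c2 - c1^4 - 2*c1^2*c2^2 + 5*c1^2 - c2^4 + c2^2 - 2) * hB + (8*a1*a2*b1*b2 - 4*a1*a2*b1*c2 - 4*a1*a2*b2*c1 - 4*a1*b1*b2*c2 + 2*a1*b1*c1^2 + 2*a1*b1*c2^2 - 2*a1*b1 + 4*a1*b2^2*c1 + 4*a2^2*b1*c1 + 8*a2^2*b2^2 - 4*a2^2*b2*c2 - 4*a2^2 - 4*a2*b1*b2*c1 - 4*a2*b2^2*c2 + 2*a2*b2*c1^2 + 2*a2*b2*c2^2 - 2*a2*b2 + 4*a2*c2 - 4*b2^2 + 4*b2*c2 - 2*c1^2 - 2*c2^2 + 2) * hC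

private lemma circle_det_ne (A B C : ℝ × ℝ)
    (hA : A.1 ^ 2 + A.2 ^ 2 = 1) (hB : B.1 ^ 2 + B.2 ^ 2 = 1) (hC : C.1 ^ 2 + C.2 ^ 2 = 1)
    (hab : A ≠ B) (hbc : B ≠ C) (hac : A ≠ C) :
    (B.1 - A.1) * (C.2 - A.2) - (B.2 - A.2) * (C.1 - A.1) ≠ 0 := by
  have pos : ∀ P Q : ℝ × ℝ, P ≠ Q → 0 < (Q.1 - P.1) ^ 2 + (Q.2 - P.2) ^ 2 := by
    intro P Q hPQ
    rcases eq_or_lt_of_le (by positivity : (0:ℝ) ≤ (Q.1 - P.1) ^ 2 + (Q.2 - P.2) ^ 2) with he | h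
    · exfalso
      have e1 : (Q.1 - P.1) ^ 2 = 0 := by nlinarith [sq_nonneg (Q.1 - P.1), sq_nonneg (Q.2 - P.2)]
      have e2 : (Q.2 - P.2) ^ 2 = 0 := by nlinarith [sq_nonneg (Q.1 - P.1), sq_nonneg (Q.2 - P.2)]
      exact hPQ (Prod.ext (by nlinarith) (by nlinarith)).symm
    · exact h
  intro h
  have key := circle_det_sq A.1 A.2 B.1 B.2 C.1 C.2 hA hB hC
  rw [h] at key
  have h1 := pos A B hab
  have h2 := pos C B (Ne.symm hbc)
  have h3 := pos A C hac
  have hp := mul_pos (mul_pos h1 h2) h3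
  rw [show (4:ℝ) * 0 ^ 2 = 0 by norm_num] at key
  linarith

/-- Topological core of Theorem 2: three points moving continuously on the unit circle and
remaining pairwise distinct cannot be such that two of them exchange positions while the
third returns to its initial position. -/
theorem stmt_9 (a b c : ℝ → ℝ × ℝ)
    (ha : ContinuousOn a (Set.Icc 0 1)) (hb : ContinuousOn b (Set.Icc 0 1))
    (hc : ContinuousOn c (Set.Icc 0 1))
    (hcirc : ∀ t ∈ Set.Icc (0 : ℝ) 1,
      (a t).1 ^ 2 + (a t).2 ^ 2 = 1 ∧ (b t).1 ^ 2 + (b t).2 ^ 2 = 1 ∧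
      (c t).1 ^ 2 + (c t).2 ^ 2 = 1)
    (hdist : ∀ t ∈ Set.Icc (0 : ℝ) 1, a t ≠ b t ∧ b t ≠ c t ∧ a t ≠ c t) :
    ¬ (a 1 = b 0 ∧ b 1 = a 0 ∧ c 1 = c 0) := by
  rintro ⟨hab, hba, hcc⟩
  set D : ℝ → ℝ := fun t =>
    ((b t).1 - (a t).1) * ((c t).2 - (a t).2) - ((b t).2 - (a t).2) * ((c t).1 - (a t).1)
    with hD
  have hDcont : ContinuousOn D (Set.Icc 0 1) := by
    apply ContinuousOn.sub
    · exact ((continuous_fst.comp_continuousOn hb).sub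
        (continuous_fst.comp_continuousOn ha)).mul
        ((continuous_snd.comp_continuousOn hc).sub (continuous_snd.comp_continuousOn ha))
    · exact ((continuous_snd.comp_continuousOn hb).sub
        (continuous_snd.comp_continuousOn ha)).mul
        ((continuous_fst.comp_continuousOn hc).sub (continuous_fst.comp_continuousOn ha))
  have hDne : ∀ t ∈ Set.Icc (0 : ℝ) 1, D t ≠ 0 := by
    intro t ht
    obtain ⟨h1, h2, h3⟩ := hcirc t ht
    obtain ⟨d1, d2, d3⟩ := hdist t ht
    exact circle_det_ne (a t) (b t) (c t) h1 h2 h3 d1 d2 d3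
  have h01 : (0 : ℝ) ∈ Set.Icc (0 : ℝ) 1 := by norm_num
  have h11 : (1 : ℝ) ∈ Set.Icc (0 : ℝ) 1 := by norm_num
  have hflip : D 1 = -D 0 := by
    simp only [hD, hab, hba, hcc]; ring
  have hD0 := hDne 0 h01
  -- IVT: D changes sign on [0,1] so it has a zero
  rcases lt_or_gt_of_ne hD0 with hneg | hpos
  · have : (0 : ℝ) ∈ Set.Icc (D 0) (D 1) := by
      constructor <;> [linarith; linarith [hflip]]
    obtain ⟨t, ht, hDt⟩ := intermediate_value_Icc (by norm_num : (0:ℝ) ≤ 1) hDcont this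
    exact hDne t ht hDt
  · have : (0 : ℝ) ∈ Set.Icc (D 1) (D 0) := by
      constructor <;> [linarith [hflip]; linarith]
    obtain ⟨t, ht, hDt⟩ := intermediate_value_Icc' (by norm_num : (0:ℝ) ≤ 1) hDcont this
    exact hDne t ht hDt
end
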